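/- arXiv:2107.05405 — 3 statements merged into one kernel-verified Lean document; each statement's English description precedes it below -/
import Mathlib

section
/- Let X be a real matrix with full column rank, D a diagonal matrix with strictly positive diagonal entries, P a substochastic matrix (nonnegative entries with row sums at most 1), and suppose the row vector 1^T D (I - P) is entrywise strictly positive. Then the matrix X^T D (I - P) X is positive definite. -/
/-!
Write `D (I - P) = D - B` with `B = D P ≥ 0`. By `2 yᵢ yⱼ ≤ yᵢ² + yⱼ²`, the form `yᵀ B y` is at
most `∑ᵢ (rᵢ + cᵢ)/2 · yᵢ²`, where `rᵢ`, `cᵢ` are the row and column sums of `B`. Substochasticity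
gives `rᵢ ≤ dᵢ` and the hypothesis on `1ᵀ D (I - P)` gives `cᵢ < dᵢ`, so `yᵀ (D - B) y` is a
sum of squares with positive weights. Finally `wᵀ Xᵀ D (I - P) X w` is this form at `y = X w`,
which is nonzero when `w` is, by full column rank.
-/

open Matrix Finset

section QuadraticForm

variable {ι : Type*} [Fintype ι]

theorem dotProduct_mulVec_le_of_nonneg {B : Matrix ι ι ℝ} (hB : ∀ i j, 0 ≤ B i j)
    (y : ι → ℝ) :
    y ⬝ᵥ B *ᵥ y ≤ ∑ i, (∑ j, B i j + ∑ j, B j i) / 2 * y i ^ 2 := by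
  calc y ⬝ᵥ B *ᵥ y = ∑ i, ∑ j, B i j * (y i * y j) := by
        simp only [dotProduct, mulVec, mul_sum]
        exact sum_congr rfl fun i _ => sum_congr rfl fun j _ => by ring
    _ ≤ ∑ i, ∑ j, B i j * ((y i ^ 2 + y j ^ 2) / 2) := by
        gcongr with i _ j _
        · exact hB i j
        · nlinarith [sq_nonneg (y i - y j)]
    _ = ∑ i, (∑ j, B i j + ∑ j, B j i) / 2 * y i ^ 2 := by
        simp only [mul_add, add_div, mul_div_assoc', sum_add_distrib]
        rw [sum_comm (f := fun i j => B i j * y j ^ 2 / 2)]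
        simp only [← sum_add_distrib, sum_mul, sum_div]
        exact sum_congr rfl fun i _ => sum_congr rfl fun j _ => by ring

theorem dotProduct_diagonal_sub_mulVec_pos [DecidableEq ι] {d : ι → ℝ} {B : Matrix ι ι ℝ}
    (hB : ∀ i j, 0 ≤ B i j) (hrow : ∀ i, ∑ j, B i j ≤ d i) (hcol : ∀ j, ∑ i, B i j < d j)
    {y : ι → ℝ} (hy : y ≠ 0) :
    0 < y ⬝ᵥ (diagonal d - B) *ᵥ y := by
  obtain ⟨i₀, hi₀⟩ := Function.ne_iff.mp hy
  have hweight : ∀ i, 0 < d i - (∑ j, B i j + ∑ j, B j i) / 2 := fun i => by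
    linarith [hrow i, hcol i]
  calc 0 < ∑ i, (d i - (∑ j, B i j + ∑ j, B j i) / 2) * y i ^ 2 :=
        sum_pos' (fun i _ => mul_nonneg (hweight i).le (sq_nonneg _))
          ⟨i₀, mem_univ _, mul_pos (hweight i₀) (pow_two_pos_of_ne_zero hi₀)⟩
    _ = ∑ i, d i * y i ^ 2 - ∑ i, (∑ j, B i j + ∑ j, B j i) / 2 * y i ^ 2 := by
        rw [← sum_sub_distrib]
        exact sum_congr rfl fun i _ => by ring
    _ ≤ ∑ i, d i * y i ^ 2 - y ⬝ᵥ B *ᵥ y := by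
        gcongr
        exact dotProduct_mulVec_le_of_nonneg hB y
    _ = y ⬝ᵥ (diagonal d - B) *ᵥ y := by
        rw [sub_mulVec, dotProduct_sub]
        simp only [dotProduct, mulVec_diagonal, sq, mul_left_comm]

end QuadraticForm

theorem dotProduct_transpose_mul_mul_mulVec {R m ι : Type*} [CommSemiring R] [Fintype m]
    [Fintype ι] (X : Matrix m ι R) (M : Matrix m m R) (w : ι → R) :
    w ⬝ᵥ (Xᵀ * M * X) *ᵥ w = (X *ᵥ w) ⬝ᵥ M *ᵥ (X *ᵥ w) := by
  rw [← mulVec_mulVec, ← mulVec_mulVec, dotProduct_mulVec, vecMul_transpose]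

theorem stmt_0 {n k : ℕ} (X : Matrix (Fin n) (Fin k) ℝ)
    (hX : ∀ v : Fin k → ℝ, X.mulVec v = 0 → v = 0)
    (d : Fin n → ℝ) (hd : ∀ s, 0 < d s)
    (P : Matrix (Fin n) (Fin n) ℝ)
    (hP0 : ∀ i j, 0 ≤ P i j) (hP1 : ∀ i, ∑ j, P i j ≤ 1)
    (hpos : ∀ j, 0 < ∑ i, ((Matrix.diagonal d) * (1 - P)) i j) :
    ∀ w : Fin k → ℝ, w ≠ 0 →
      0 < w ⬝ᵥ (Xᵀ * (Matrix.diagonal d) * (1 - P) * X).mulVec w := by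
  intro w hw
  have hsplit : diagonal d * (1 - P) = diagonal d - diagonal d * P := by
    rw [Matrix.mul_sub, Matrix.mul_one]
  have hrow : ∀ i, ∑ j, (diagonal d * P) i j ≤ d i := fun i => by
    simpa [diagonal_mul, ← mul_sum] using mul_le_mul_of_nonneg_left (hP1 i) (hd i).le
  have hcol : ∀ j, ∑ i, (diagonal d * P) i j < d j := fun j => by
    simpa [diagonal_mul, mul_sub, sum_sub_distrib, one_apply] using hpos j
  rw [Matrix.mul_assoc Xᵀ, hsplit, dotProduct_transpose_mul_mul_mulVec]
  exact dotProduct_diagonal_sub_mulVec_pos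
    (fun i j => by simpa [diagonal_mul] using mul_nonneg (hd i).le (hP0 i j))
    hrow hcol fun h => hw (hX w h)
end

section
/- Let D be a diagonal matrix with strictly positive diagonal entries and P a substochastic matrix such that 1^T D (I - P) is entrywise strictly positive, where the diagonal entries of D are nonnegative off the restriction and the off-diagonal entries of D(I-P) are nonpositive. Then the symmetric matrix Y = D(I - P) + (D(I - P))^T is strictly diagonally dominant with positive diagonal, and hence positive definite. -/
/-!
Put `A = D (I - P)`, so `Y = A + Aᵀ`. The off-diagonal entries of `A` are `-dᵢ Pᵢⱼ ≤ 0`, its row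
sums `dᵢ (1 - ∑ⱼ Pᵢⱼ)` are nonnegative and its column sums positive. For `j ≠ i`,
`|Yᵢⱼ| = -Aᵢⱼ - Aⱼᵢ`, so the off-diagonal absolute row sum of `Y` is at most `Aᵢᵢ` (row sums) plus
something strictly below `Aᵢᵢ` (column sums), i.e. strictly below `Yᵢᵢ = 2 Aᵢᵢ`.
By Gershgorin's circle theorem every eigenvalue of the symmetric matrix `Y` lies within
`∑_{j ≠ k} |Yₖⱼ| < Yₖₖ` of some `Yₖₖ`, hence is positive, and `Y` is positive definite.
-/

open Matrix Finset

open scoped ComplexOrder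

namespace Matrix

variable {ι : Type*} [Fintype ι] [DecidableEq ι]

theorem IsHermitian.hasEigenvalue_eigenvalues {𝕜 : Type*} [RCLike 𝕜] {A : Matrix ι ι 𝕜}
    (hA : A.IsHermitian) (i : ι) :
    Module.End.HasEigenvalue (toLin' A) (hA.eigenvalues i : 𝕜) := by
  refine Module.End.hasEigenvalue_of_hasEigenvector (x := ⇑(hA.eigenvectorBasis i)) ⟨?_, ?_⟩
  · rw [Module.End.mem_eigenspace_iff, toLin'_apply, hA.mulVec_eigenvectorBasis,
      RCLike.real_smul_eq_coe_smul (K := 𝕜)]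
  · simpa using hA.eigenvectorBasis.orthonormal.ne_zero i

theorem PosDef.of_sum_norm_offDiag_lt_re_diag {𝕜 : Type*} [RCLike 𝕜] {A : Matrix ι ι 𝕜}
    (hA : A.IsHermitian) (hdom : ∀ i, ∑ j ∈ univ.erase i, ‖A i j‖ < RCLike.re (A i i)) :
    A.PosDef := by
  rw [hA.posDef_iff_eigenvalues_pos]
  intro i
  obtain ⟨k, hk⟩ := eigenvalue_mem_ball (hA.hasEigenvalue_eigenvalues i)
  rw [mem_closedBall_iff_norm'] at hk
  have := RCLike.re_le_norm ((A k k) - (hA.eigenvalues i : 𝕜))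
  simp only [map_sub, RCLike.ofReal_re] at this
  linarith [hdom k]

theorem sum_abs_offDiag_add_transpose_lt {R : Type*} [Field R] [LinearOrder R]
    [IsStrictOrderedRing R] {A : Matrix ι ι R}
    (hoff : ∀ i j, i ≠ j → A i j ≤ 0) (hrow : ∀ i, 0 ≤ ∑ j, A i j)
    (hcol : ∀ j, 0 < ∑ i, A i j) (i : ι) :
    ∑ j ∈ univ.erase i, |(A + Aᵀ) i j| < (A + Aᵀ) i i := by
  have habs : ∀ j ∈ univ.erase i, |(A + Aᵀ) i j| = -A i j + -A j i := fun j hj => by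
    have hji := (mem_erase.mp hj).1
    rw [add_apply, transpose_apply, abs_of_nonpos (add_nonpos (hoff i j hji.symm) (hoff j i hji)),
      neg_add]
  rw [sum_congr rfl habs, sum_add_distrib, sum_neg_distrib, sum_neg_distrib, add_apply,
    transpose_apply]
  have hr := hrow i
  have hc := hcol i
  rw [← add_sum_erase _ _ (mem_univ i)] at hr hc
  linarith

section Ring

variable {R : Type*} [Ring R]

theorem diagonal_mul_one_sub_apply_of_ne (d : ι → R) (P : Matrix ι ι R)
    {i j : ι} (hij : i ≠ j) : (diagonal d * (1 - P)) i j = -(d i * P i j) := by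
  simp [diagonal_mul, one_apply_ne hij]

theorem sum_diagonal_mul_one_sub_apply (d : ι → R) (P : Matrix ι ι R)
    (i : ι) : ∑ j, (diagonal d * (1 - P)) i j = d i * (1 - ∑ j, P i j) := by
  simp [diagonal_mul, ← mul_sum, mul_sub, one_apply]

end Ring

end Matrix

theorem stmt_1 {n : ℕ}
    (d : Fin n → ℝ) (hd : ∀ s, 0 < d s)
    (P : Matrix (Fin n) (Fin n) ℝ)
    (hP0 : ∀ i j, 0 ≤ P i j) (hP1 : ∀ i, ∑ j, P i j ≤ 1)
    (hpos : ∀ j, 0 < ∑ i, ((Matrix.diagonal d) * (1 - P)) i j) :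
    let Y := (Matrix.diagonal d) * (1 - P) + ((Matrix.diagonal d) * (1 - P))ᵀ
    (∀ i, 0 < Y i i ∧ ∑ j ∈ Finset.univ.erase i, |Y i j| < |Y i i|) ∧
    (∀ x : Fin n → ℝ, x ≠ 0 → 0 < x ⬝ᵥ Y.mulVec x) := by
  intro Y
  have hoff i j (hij : i ≠ j) : (diagonal d * (1 - P)) i j ≤ 0 := by
    rw [diagonal_mul_one_sub_apply_of_ne d P hij, neg_nonpos]
    exact mul_nonneg (hd i).le (hP0 i j)
  have hrow i : 0 ≤ ∑ j, (diagonal d * (1 - P)) i j := by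
    rw [sum_diagonal_mul_one_sub_apply]
    exact mul_nonneg (hd i).le (sub_nonneg.mpr (hP1 i))
  have hdom : ∀ i, ∑ j ∈ univ.erase i, |Y i j| < Y i i :=
    sum_abs_offDiag_add_transpose_lt hoff hrow hpos
  have hdiag i : 0 < Y i i := (sum_nonneg fun _ _ => abs_nonneg _).trans_lt (hdom i)
  refine ⟨fun i => ⟨hdiag i, by rw [abs_of_pos (hdiag i)]; exact hdom i⟩, fun x hx => ?_⟩
  have hY : Y.PosDef := PosDef.of_sum_norm_offDiag_lt_re_diag
    (isHermitian_iff_isSymm.mpr (isSymm_add_transpose_self _)) hdom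
  simpa using hY.dotProduct_mulVec_pos hx
end

section
/- Let F and Δ be real-valued random variables that are independent, with Var(F) and Var(Δ) finite, and let f = E[F]. Let f_θ be a real number with ε = |f_θ − f|. If ε(ε + 2|f|) < Var(F), then Var(f_θ · Δ) ≤ Var(F · Δ); moreover the inequality is strict whenever Var(Δ) > 0. -/
/-!
For independent `F` and `Δ`, expanding `E[(FΔ)²] = E[F²] E[Δ²]` gives
`Var(FΔ) = Var F Var Δ + Var F (E Δ)² + Var Δ (E F)² ≥ E[F²] Var Δ`,
while `Var(f_θ Δ) = f_θ² Var Δ`. Since `f_θ² - f² ≤ ε(ε + 2|f|)`, the hypothesis on `ε`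
gives `f_θ² < f² + Var F = E[F²]`.
-/

open MeasureTheory ProbabilityTheory

lemma sq_sub_sq_le_abs_sub_mul (a b : ℝ) : a ^ 2 - b ^ 2 ≤ |a - b| * (|a - b| + 2 * |b|) := by
  have hab : |a + b| ≤ |a - b| + 2 * |b| := by
    calc |a + b| = |(a - b) + 2 * b| := by ring_nf
      _ ≤ |a - b| + |2 * b| := abs_add_le _ _
      _ = |a - b| + 2 * |b| := by rw [abs_mul, abs_two]
  calc a ^ 2 - b ^ 2 ≤ |a ^ 2 - b ^ 2| := le_abs_self _
    _ = |a - b| * |a + b| := by rw [← abs_mul]; ring_nf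
    _ ≤ |a - b| * (|a - b| + 2 * |b|) := mul_le_mul_of_nonneg_left hab (abs_nonneg _)

namespace ProbabilityTheory.IndepFun

variable {Ω : Type*} {mΩ : MeasurableSpace Ω} {μ : Measure Ω} {X Y : Ω → ℝ}

lemma integral_fun_mul_sq (h : IndepFun X Y μ) (hX : AEStronglyMeasurable X μ)
    (hY : AEStronglyMeasurable Y μ) :
    ∫ ω, (X ω * Y ω) ^ 2 ∂μ = (∫ ω, X ω ^ 2 ∂μ) * ∫ ω, Y ω ^ 2 ∂μ := by
  have hsq : Measurable fun x : ℝ => x ^ 2 := measurable_id.pow_const 2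
  simp only [mul_pow]
  exact (h.comp hsq hsq).integral_fun_mul_eq_mul_integral (hX.pow 2) (hY.pow 2)

lemma memLp_two_fun_mul (h : IndepFun X Y μ) (hX : MemLp X 2 μ) (hY : MemLp Y 2 μ) :
    MemLp (fun ω => X ω * Y ω) 2 μ := by
  have hsq : Measurable fun x : ℝ => x ^ 2 := measurable_id.pow_const 2
  refine (memLp_two_iff_integrable_sq (hX.1.mul hY.1)).2 ?_
  simp only [Pi.mul_apply, mul_pow]
  exact (h.comp hsq hsq).integrable_mul hX.integrable_sq hY.integrable_sq

lemma variance_fun_mul [IsProbabilityMeasure μ] (h : IndepFun X Y μ) (hX : MemLp X 2 μ)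
    (hY : MemLp Y 2 μ) :
    Var[fun ω => X ω * Y ω; μ] =
      Var[X; μ] * Var[Y; μ] + Var[X; μ] * μ[Y] ^ 2 + Var[Y; μ] * μ[X] ^ 2 := by
  rw [variance_eq_sub (h.memLp_two_fun_mul hX hY), variance_eq_sub hX, variance_eq_sub hY]
  simp only [Pi.pow_apply]
  rw [h.integral_fun_mul_sq hX.1 hY.1, h.integral_fun_mul_eq_mul_integral hX.1 hY.1]
  ring

end ProbabilityTheory.IndepFun

theorem stmt_5 {Ω : Type*} [MeasureSpace Ω] (hμ : IsProbabilityMeasure (ℙ : Measure Ω))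
    (F Δ : Ω → ℝ)
    (hind : IndepFun F Δ)
    (hF : MemLp F 2 ℙ) (hΔ : MemLp Δ 2 ℙ)
    (f fθ ε : ℝ) (hf : f = ∫ ω, F ω) (hε : ε = |fθ - f|)
    (hcond : ε * (ε + 2 * |f|) < variance F ℙ) :
    variance (fun ω => fθ * Δ ω) ℙ ≤ variance (fun ω => F ω * Δ ω) ℙ ∧
    (0 < variance Δ ℙ →
      variance (fun ω => fθ * Δ ω) ℙ < variance (fun ω => F ω * Δ ω) ℙ) := by
  have hfθ : fθ ^ 2 < variance F ℙ + f ^ 2 := by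
    have := sq_sub_sq_le_abs_sub_mul fθ f
    rw [← hε] at this
    linarith
  have hlower : (variance F ℙ + f ^ 2) * variance Δ ℙ ≤ variance (fun ω => F ω * Δ ω) ℙ := by
    rw [hind.variance_fun_mul hF hΔ, ← hf]
    linarith [mul_nonneg (variance_nonneg F ℙ) (sq_nonneg (∫ ω, Δ ω))]
  rw [variance_const_mul]
  exact ⟨(mul_le_mul_of_nonneg_right hfθ.le (variance_nonneg Δ ℙ)).trans hlower,
    fun hpos => (mul_lt_mul_of_pos_right hfθ hpos).trans_le hlower⟩
end
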